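/- arXiv:2005.09301 — 4 statements merged into one kernel-verified Lean document; each statement's English description precedes it below -/
import Mathlib

section
/- Let X = [X₁ | X₂] with X₁ ∈ ℝ^{n×p₁} of full column rank and X₂ ∈ ℝ^{n×p₂}, and let Λ' be the block-diagonal penalty matrix with zero block on the X₁ coordinates and a positive definite diagonal block Λ on the X₂ coordinates. Assume XᵀX + Λ' is invertible. Writing L = (XᵀX + Λ')⁻¹Xᵀ as a stacked matrix [L₁; L₂], one has L₂ = (X₂ᵀP₁X₂ + Λ)⁻¹X₂ᵀP₁ and L₁ = (X₁ᵀX₁)⁻¹X₁ᵀ(I_n - X₂L₂), where P₁ = I_n - X₁(X₁ᵀX₁)⁻¹X₁ᵀ. -/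
open Matrix

/-- Proposition 1's core decomposition (unweighted case): with `X = [X₁ | X₂]`,
`Λ' = diag(0, Λ)` and `L = (XᵀX + Λ')⁻¹Xᵀ = [L₁; L₂]`, one has
`L₂ = (X₂ᵀP₁X₂ + Λ)⁻¹X₂ᵀP₁` and `L₁ = (X₁ᵀX₁)⁻¹X₁ᵀ(I - X₂L₂)`. -/
theorem unpenalized_decomposition {n p₁ p₂ : ℕ}
    (X₁ : Matrix (Fin n) (Fin p₁) ℝ) (hrank : X₁.rank = p₁)
    (X₂ : Matrix (Fin n) (Fin p₂) ℝ)
    (lam : Fin p₂ → ℝ) (hlam : ∀ j, 0 < lam j)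
    (Λ : Matrix (Fin p₂) (Fin p₂) ℝ) (hΛ : Λ = Matrix.diagonal lam)
    (X : Matrix (Fin n) (Fin p₁ ⊕ Fin p₂) ℝ) (hX : X = Matrix.fromCols X₁ X₂)
    (Λ' : Matrix (Fin p₁ ⊕ Fin p₂) (Fin p₁ ⊕ Fin p₂) ℝ)
    (hΛ' : Λ' = Matrix.fromBlocks 0 0 0 Λ)
    (hinv : IsUnit (Xᵀ * X + Λ').det)
    (L : Matrix (Fin p₁ ⊕ Fin p₂) (Fin n) ℝ) (hL : L = (Xᵀ * X + Λ')⁻¹ * Xᵀ)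
    (L₁ : Matrix (Fin p₁) (Fin n) ℝ) (hL₁ : L₁ = L.submatrix Sum.inl id)
    (L₂ : Matrix (Fin p₂) (Fin n) ℝ) (hL₂ : L₂ = L.submatrix Sum.inr id)
    (P₁ : Matrix (Fin n) (Fin n) ℝ)
    (hP : P₁ = 1 - X₁ * (X₁ᵀ * X₁)⁻¹ * X₁ᵀ) :
    L₂ = (X₂ᵀ * P₁ * X₂ + Λ)⁻¹ * X₂ᵀ * P₁ ∧
      L₁ = (X₁ᵀ * X₁)⁻¹ * X₁ᵀ * (1 - X₂ * L₂) := by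
  -- `A := X₁ᵀX₁` is invertible
  have hA : IsUnit (X₁ᵀ * X₁) := by
    rw [← Matrix.mulVec_surjective_iff_isUnit]
    have hr : (X₁ᵀ * X₁).rank = p₁ := by
      rw [Matrix.rank_transpose_mul_self, hrank]
    have htop : LinearMap.range (X₁ᵀ * X₁).mulVecLin = ⊤ := by
      apply Submodule.eq_top_of_finrank_eq
      rw [← Matrix.rank, hr, Module.finrank_fintype_fun_eq_card, Fintype.card_fin]
    intro v
    exact LinearMap.range_eq_top.mp htop v
  have hAd : IsUnit (X₁ᵀ * X₁).det := (Matrix.isUnit_iff_isUnit_det _).mp hA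
  have hAinv : (X₁ᵀ * X₁)⁻¹ * (X₁ᵀ * X₁) = 1 := Matrix.nonsing_inv_mul _ hAd
  have hAinv' : (X₁ᵀ * X₁) * (X₁ᵀ * X₁)⁻¹ = 1 := Matrix.mul_nonsing_inv _ hAd
  -- basic facts about P₁
  have hX₁P : X₁ᵀ * P₁ = 0 := by
    rw [hP, Matrix.mul_sub, Matrix.mul_one, ← Matrix.mul_assoc, ← Matrix.mul_assoc,
      hAinv', Matrix.one_mul, sub_self]
  have hPt : P₁ᵀ = P₁ := by
    rw [hP, Matrix.transpose_sub, Matrix.transpose_one, Matrix.transpose_mul,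
      Matrix.transpose_mul, Matrix.transpose_transpose,
      Matrix.transpose_nonsing_inv, Matrix.transpose_mul, Matrix.transpose_transpose,
      Matrix.mul_assoc]
  have hPX₁ : P₁ * X₁ = 0 := by
    have h := congrArg Matrix.transpose hX₁P
    rw [Matrix.transpose_mul, hPt, Matrix.transpose_transpose, Matrix.transpose_zero] at h
    exact h
  have hPP : P₁ * P₁ = P₁ := by
    nth_rewrite 1 [hP]
    rw [Matrix.sub_mul, Matrix.one_mul, Matrix.mul_assoc, Matrix.mul_assoc, hX₁P,
      Matrix.mul_zero, Matrix.mul_zero, sub_zero]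
  -- `M := X₂ᵀ P₁ X₂ + Λ` is positive definite, hence invertible
  have hMsd : (X₂ᵀ * P₁ * X₂).PosSemidef := by
    have h : X₂ᵀ * P₁ * X₂ = (P₁ * X₂)ᴴ * (P₁ * X₂) := by
      rw [Matrix.conjTranspose_eq_transpose_of_trivial, Matrix.transpose_mul, hPt]
      simp only [Matrix.mul_assoc]
      rw [← Matrix.mul_assoc P₁ P₁ X₂, hPP]
    rw [h]
    exact Matrix.posSemidef_conjTranspose_mul_self _
  have hMpd : (X₂ᵀ * P₁ * X₂ + Λ).PosDef := by
    refine Matrix.PosDef.posSemidef_add hMsd ?_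
    rw [hΛ]
    exact Matrix.PosDef.diagonal hlam
  have hMd : IsUnit (X₂ᵀ * P₁ * X₂ + Λ).det := hMpd.det_pos.ne'.isUnit
  have hMinv : (X₂ᵀ * P₁ * X₂ + Λ) * (X₂ᵀ * P₁ * X₂ + Λ)⁻¹ = 1 :=
    Matrix.mul_nonsing_inv _ hMd
  -- candidate blocks
  set L₂' : Matrix (Fin p₂) (Fin n) ℝ := (X₂ᵀ * P₁ * X₂ + Λ)⁻¹ * X₂ᵀ * P₁ with hL₂'
  set L₁' : Matrix (Fin p₁) (Fin n) ℝ := (X₁ᵀ * X₁)⁻¹ * X₁ᵀ * (1 - X₂ * L₂') with hL₁'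
  -- the block equations
  have hE1 : (X₁ᵀ * X₁) * L₁' + (X₁ᵀ * X₂) * L₂' = X₁ᵀ := by
    rw [hL₁', ← Matrix.mul_assoc, ← Matrix.mul_assoc, hAinv', Matrix.one_mul,
      Matrix.mul_sub, Matrix.mul_one, ← Matrix.mul_assoc]
    abel
  have hkey : (X₂ᵀ * P₁ * X₂ + Λ) * L₂' = X₂ᵀ * P₁ := by
    rw [hL₂', ← Matrix.mul_assoc, ← Matrix.mul_assoc, hMinv, Matrix.one_mul]
  have hXAX : X₂ᵀ * X₁ * ((X₁ᵀ * X₁)⁻¹ * X₁ᵀ) = X₂ᵀ - X₂ᵀ * P₁ := by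
    rw [hP, Matrix.mul_sub, Matrix.mul_one, sub_sub_cancel]
    simp only [Matrix.mul_assoc]
  have hE2 : (X₂ᵀ * X₁) * L₁' + (X₂ᵀ * X₂ + Λ) * L₂' = X₂ᵀ := by
    rw [hL₁', ← Matrix.mul_assoc (X₂ᵀ * X₁) ((X₁ᵀ * X₁)⁻¹ * X₁ᵀ) (1 - X₂ * L₂'), hXAX]
    have expand : (X₂ᵀ - X₂ᵀ * P₁) * (1 - X₂ * L₂')
        = X₂ᵀ - X₂ᵀ * P₁ - X₂ᵀ * X₂ * L₂' + X₂ᵀ * P₁ * X₂ * L₂' := by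
      simp only [Matrix.sub_mul, Matrix.mul_sub, Matrix.mul_one, ← Matrix.mul_assoc]
      abel
    have h : X₂ᵀ * P₁ * X₂ * L₂' + Λ * L₂' = X₂ᵀ * P₁ := by
      rw [← Matrix.add_mul, hkey]
    rw [expand, Matrix.add_mul,
      show X₂ᵀ - X₂ᵀ * P₁ - X₂ᵀ * X₂ * L₂' + X₂ᵀ * P₁ * X₂ * L₂' + (X₂ᵀ * X₂ * L₂' + Λ * L₂')
        = X₂ᵀ - X₂ᵀ * P₁ + (X₂ᵀ * P₁ * X₂ * L₂' + Λ * L₂') from by abel, h]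
    abel
  -- the full matrix built from the candidate blocks solves the system
  have hS : (Xᵀ * X + Λ') * Matrix.fromRows L₁' L₂' = Xᵀ := by
    rw [hX, hΛ', Matrix.transpose_fromCols, Matrix.fromRows_mul_fromCols,
      Matrix.fromBlocks_add, Matrix.fromBlocks_mul_fromRows, add_zero, add_zero, add_zero,
      hE1, hE2]
  have hSinv : (Xᵀ * X + Λ')⁻¹ * (Xᵀ * X + Λ') = 1 := Matrix.nonsing_inv_mul _ hinv
  have hLeq : L = Matrix.fromRows L₁' L₂' := by
    calc L = (Xᵀ * X + Λ')⁻¹ * ((Xᵀ * X + Λ') * Matrix.fromRows L₁' L₂') := by rw [hL, hS]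
    _ = Matrix.fromRows L₁' L₂' := by rw [← Matrix.mul_assoc, hSinv, Matrix.one_mul]
  have h2 : L₂ = L₂' := by
    rw [hL₂, hLeq]
    ext i j
    simp [Matrix.fromRows_apply_inl, Matrix.fromRows_apply_inr]
  refine ⟨h2, ?_⟩
  rw [hL₁, hLeq, h2, ← hL₁']
  ext i j
  simp [Matrix.fromRows_apply_inl, Matrix.fromRows_apply_inr]
end

section
/- Let X = RVᵀ be a decomposition with R ∈ ℝ^{n×n}, V ∈ ℝ^{p×n} having orthonormal columns (VᵀV = I_n), and let λ > 0. Then the uni-penalty ridge estimator satisfies (XᵀX + λI_p)⁻¹XᵀY = V(RᵀR + λI_n)⁻¹RᵀY for every Y ∈ ℝⁿ. -/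
open Matrix

/-- SVD-based fast ridge identity: if `X = RVᵀ` with `VᵀV = I_n` and `λ > 0`,
then `(XᵀX + λI_p)⁻¹XᵀY = V(RᵀR + λI_n)⁻¹RᵀY` for every `Y`. -/
theorem svd_ridge {n p : ℕ} (X : Matrix (Fin n) (Fin p) ℝ)
    (R : Matrix (Fin n) (Fin n) ℝ) (V : Matrix (Fin p) (Fin n) ℝ)
    (hX : X = R * Vᵀ) (hV : Vᵀ * V = 1) (l : ℝ) (hl : 0 < l) :
    ∀ Y : Fin n → ℝ,
      ((Xᵀ * X + l • (1 : Matrix (Fin p) (Fin p) ℝ))⁻¹ * Xᵀ) *ᵥ Y =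
        V *ᵥ (((Rᵀ * R + l • (1 : Matrix (Fin n) (Fin n) ℝ))⁻¹ * Rᵀ) *ᵥ Y) := by
  intro Y
  set A := Xᵀ * X + l • (1 : Matrix (Fin p) (Fin p) ℝ) with hA
  set B := Rᵀ * R + l • (1 : Matrix (Fin n) (Fin n) ℝ) with hB
  have hsmul : ∀ m : ℕ, (l • (1 : Matrix (Fin m) (Fin m) ℝ)).PosDef := by
    intro m
    rw [smul_eq_diagonal_mul, Matrix.mul_one]
    exact posDef_diagonal_iff.mpr fun _ => hl
  have hXt : Xᴴ = Xᵀ := by ext i j; simp [conjTranspose]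
  have hRt : Rᴴ = Rᵀ := by ext i j; simp [conjTranspose]
  have hApd : A.PosDef := by
    have := posSemidef_conjTranspose_mul_self X
    rw [hXt] at this
    exact Matrix.PosDef.posSemidef_add this (hsmul p)
  have hBpd : B.PosDef := by
    have := posSemidef_conjTranspose_mul_self R
    rw [hRt] at this
    exact Matrix.PosDef.posSemidef_add this (hsmul n)
  haveI : Invertible A := hApd.isUnit.invertible
  haveI : Invertible B := hBpd.isUnit.invertible
  have key : A * (V * B⁻¹ * Rᵀ) = Xᵀ := by
    have hXtX : Xᵀ * X = V * (Rᵀ * R) * Vᵀ := by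
      rw [hX]; simp [Matrix.transpose_mul, Matrix.mul_assoc]
    have h1 : A * (V * B⁻¹ * Rᵀ) = V * (B * (B⁻¹ * Rᵀ)) := by
      rw [hA, hXtX]
      nth_rewrite 2 [hB]
      simp only [Matrix.add_mul, Matrix.mul_add, Matrix.smul_mul, Matrix.mul_smul,
        Matrix.one_mul, Matrix.mul_one, Matrix.mul_assoc]
      rw [← Matrix.mul_assoc Vᵀ V, hV, Matrix.one_mul]
    rw [h1, Matrix.mul_inv_cancel_left_of_invertible, hX, Matrix.transpose_mul,
      Matrix.transpose_transpose]
  calc (A⁻¹ * Xᵀ) *ᵥ Y = (A⁻¹ * (A * (V * B⁻¹ * Rᵀ))) *ᵥ Y := by rw [key]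
    _ = V *ᵥ ((B⁻¹ * Rᵀ) *ᵥ Y) := by
        rw [Matrix.inv_mul_cancel_left_of_invertible, Matrix.mul_assoc, ← Matrix.mulVec_mulVec]
end

section
/- Let X ∈ ℝ^{n×p}, Λ ∈ ℝ^{p×p} positive definite diagonal, W ∈ ℝ^{n×n} positive definite diagonal, and let 'in' ⊆ {1,…,n} index a subset of rows with complement 'out'. Then X_out(Λ + X_inᵀW X_in)⁻¹X_inᵀ = Γ_{out,in} - Γ_{out,in}(W⁻¹ + Γ_{in,in})⁻¹Γ_{in,in}, where Γ = XΛ⁻¹Xᵀ and Γ_{A,B} denotes the submatrix of Γ with rows indexed by A and columns by B, and W is restricted to the 'in' samples. -/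
open Matrix

/-- Cross-validation hat matrix identity: for a training set `S` of rows with
complement `out`, `X_out(Λ + X_inᵀWX_in)⁻¹X_inᵀ =
Γ_{out,in} - Γ_{out,in}(W⁻¹ + Γ_{in,in})⁻¹Γ_{in,in}` where `Γ = XΛ⁻¹Xᵀ` and
submatrices of `Γ` are taken with the corresponding row/column indices. -/
theorem cv_hat_matrix {n p : ℕ} (X : Matrix (Fin n) (Fin p) ℝ)
    (lam : Fin p → ℝ) (hlam : ∀ j, 0 < lam j)
    (Λ : Matrix (Fin p) (Fin p) ℝ) (hΛ : Λ = Matrix.diagonal lam)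
    (S : Finset (Fin n))
    (w : {i // i ∈ S} → ℝ) (hw : ∀ i, 0 < w i)
    (W : Matrix {i // i ∈ S} {i // i ∈ S} ℝ) (hW : W = Matrix.diagonal w)
    (Xin : Matrix {i // i ∈ S} (Fin p) ℝ)
    (hXin : Xin = X.submatrix (Subtype.val : {i // i ∈ S} → Fin n) id)
    (Xout : Matrix {i // i ∉ S} (Fin p) ℝ)
    (hXout : Xout = X.submatrix (Subtype.val : {i // i ∉ S} → Fin n) id)
    (Γ : Matrix (Fin n) (Fin n) ℝ) (hΓ : Γ = X * Λ⁻¹ * Xᵀ)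
    (Γoutin : Matrix {i // i ∉ S} {i // i ∈ S} ℝ)
    (hΓoutin : Γoutin = Γ.submatrix Subtype.val Subtype.val)
    (Γinin : Matrix {i // i ∈ S} {i // i ∈ S} ℝ)
    (hΓinin : Γinin = Γ.submatrix Subtype.val Subtype.val) :
    Xout * (Λ + Xinᵀ * W * Xin)⁻¹ * Xinᵀ =
      Γoutin - Γoutin * (W⁻¹ + Γinin)⁻¹ * Γinin := by
  -- Rewrite the submatrices of Γ as products
  have hΓoutin' : Γoutin = Xout * Λ⁻¹ * Xinᵀ := by
    subst hΓ hXout hXin hΓoutin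
    ext i j
    simp [Matrix.mul_apply]
  have hΓinin' : Γinin = Xin * Λ⁻¹ * Xinᵀ := by
    subst hΓ hXin hΓinin
    ext i j
    simp [Matrix.mul_apply]
  have hΛu : IsUnit Λ := by
    rw [hΛ]
    exact (Matrix.isUnit_iff_isUnit_det _).2 (by
      simp [Matrix.det_diagonal]
      exact (Finset.prod_pos fun j _ => hlam j).ne')
  have hWu : IsUnit W := by
    rw [hW]
    exact (Matrix.isUnit_iff_isUnit_det _).2 (by
      simp [Matrix.det_diagonal]
      exact (Finset.prod_pos fun j _ => hw j).ne')
  have hΛinv : Λ⁻¹ = Matrix.diagonal (fun j => (lam j)⁻¹) := by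
    apply Matrix.inv_eq_right_inv
    rw [hΛ, Matrix.diagonal_mul_diagonal]
    convert Matrix.diagonal_one using 2
    exact funext fun j => mul_inv_cancel₀ (hlam j).ne'
  have hWinv : W⁻¹ = Matrix.diagonal (fun i => (w i)⁻¹) := by
    apply Matrix.inv_eq_right_inv
    rw [hW, Matrix.diagonal_mul_diagonal]
    convert Matrix.diagonal_one using 2
    exact funext fun i => mul_inv_cancel₀ (hw i).ne'
  have hpsd : (Xin * Λ⁻¹ * Xinᵀ).PosSemidef := by
    have h : (Λ⁻¹).PosSemidef := by
      rw [hΛinv]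
      exact Matrix.posSemidef_diagonal_iff.2 fun j => (inv_pos.2 (hlam j)).le
    simpa using h.mul_mul_conjTranspose_same Xin
  have hpd : (W⁻¹ + Xin * Λ⁻¹ * Xinᵀ).PosDef := by
    have hWpd : (W⁻¹).PosDef := by
      rw [hWinv]
      exact Matrix.PosDef.diagonal fun i => inv_pos.2 (hw i)
    exact hWpd.add_posSemidef hpsd
  have hACu : IsUnit (W⁻¹ + Xin * Λ⁻¹ * Xinᵀ) :=
    (Matrix.isUnit_iff_isUnit_det _).2 hpd.det_pos.ne'.isUnit
  rw [Matrix.add_mul_mul_inv_eq_sub Λ Xinᵀ W Xin hΛu hWu hACu]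
  rw [hΓoutin', hΓinin']
  simp only [Matrix.mul_sub, Matrix.sub_mul, Matrix.mul_assoc]
end

section
/- Let X₁ ∈ ℝ^{n×p₁} with full column rank, X₂ ∈ ℝ^{n×p₂}, Λ positive definite diagonal of size p₂, P₁ = I_n - X₁(X₁ᵀX₁)⁻¹X₁ᵀ, and Γ = X₂Λ⁻¹X₂ᵀ. Then I_n + P₁Γ is invertible and X₂(X₂ᵀP₁X₂ + Λ)⁻¹X₂ᵀ P₁ = Γ(I_n - (I_n + P₁Γ)⁻¹P₁Γ)P₁. -/
open Matrix

private lemma isUnit_of_rank_eq_card {m : ℕ} (A : Matrix (Fin m) (Fin m) ℝ)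
    (h : A.rank = m) : IsUnit A := by
  rw [← Matrix.mulVec_injective_iff_isUnit]
  have hsurj : Function.Surjective A.mulVecLin := by
    rw [← LinearMap.range_eq_top]
    apply Submodule.eq_top_of_finrank_eq
    simpa [Matrix.rank] using h
  exact (LinearMap.injective_iff_surjective).mpr hsurj

/-- Core identity of Proposition 1 (unweighted case): `I + P₁Γ` is invertible and
`X₂(X₂ᵀP₁X₂ + Λ)⁻¹X₂ᵀP₁ = Γ(I - (I + P₁Γ)⁻¹P₁Γ)P₁` with `Γ = X₂Λ⁻¹X₂ᵀ`. -/
theorem hat_two_identity {n p₁ p₂ : ℕ}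
    (X₁ : Matrix (Fin n) (Fin p₁) ℝ) (hrank : X₁.rank = p₁)
    (X₂ : Matrix (Fin n) (Fin p₂) ℝ)
    (lam : Fin p₂ → ℝ) (hlam : ∀ j, 0 < lam j)
    (Λ : Matrix (Fin p₂) (Fin p₂) ℝ) (hΛ : Λ = Matrix.diagonal lam)
    (P₁ : Matrix (Fin n) (Fin n) ℝ)
    (hP : P₁ = 1 - X₁ * (X₁ᵀ * X₁)⁻¹ * X₁ᵀ)
    (Γ : Matrix (Fin n) (Fin n) ℝ) (hΓ : Γ = X₂ * Λ⁻¹ * X₂ᵀ) :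
    IsUnit (1 + P₁ * Γ).det ∧
      X₂ * (X₂ᵀ * P₁ * X₂ + Λ)⁻¹ * X₂ᵀ * P₁ =
        Γ * (1 - (1 + P₁ * Γ)⁻¹ * P₁ * Γ) * P₁ := by
  -- X₁ᵀX₁ is invertible
  have hG : IsUnit (X₁ᵀ * X₁) := by
    apply isUnit_of_rank_eq_card
    rw [Matrix.rank_transpose_mul_self, hrank]
  have hGdet : IsUnit (X₁ᵀ * X₁).det := (Matrix.isUnit_iff_isUnit_det _).mp hG
  -- P₁ is symmetric
  have hPsymm : P₁ᵀ = P₁ := by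
    rw [hP]
    have h1 : ((X₁ᵀ * X₁)⁻¹)ᵀ = (X₁ᵀ * X₁)⁻¹ := by
      rw [Matrix.transpose_nonsing_inv]
      congr 1
      rw [Matrix.transpose_mul, Matrix.transpose_transpose]
    simp [Matrix.transpose_sub, Matrix.transpose_mul, Matrix.transpose_transpose,
      Matrix.mul_assoc, h1]
  -- P₁ is idempotent
  have hPidem : P₁ * P₁ = P₁ := by
    rw [hP]
    have hinv : (X₁ᵀ * X₁)⁻¹ * (X₁ᵀ * X₁) = 1 := Matrix.nonsing_inv_mul _ hGdet
    have key : (X₁ * (X₁ᵀ * X₁)⁻¹ * X₁ᵀ) * (X₁ * (X₁ᵀ * X₁)⁻¹ * X₁ᵀ)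
        = X₁ * (X₁ᵀ * X₁)⁻¹ * X₁ᵀ := by
      calc (X₁ * (X₁ᵀ * X₁)⁻¹ * X₁ᵀ) * (X₁ * (X₁ᵀ * X₁)⁻¹ * X₁ᵀ)
          = X₁ * (((X₁ᵀ * X₁)⁻¹ * (X₁ᵀ * X₁)) * ((X₁ᵀ * X₁)⁻¹ * X₁ᵀ)) := by
            simp only [Matrix.mul_assoc]
        _ = X₁ * (X₁ᵀ * X₁)⁻¹ * X₁ᵀ := by rw [hinv, Matrix.one_mul, Matrix.mul_assoc]
    simp only [sub_mul, mul_sub, one_mul, mul_one, key]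
    abel
  -- S := X₂ᵀ P₁ X₂ is positive semidefinite
  set S := X₂ᵀ * P₁ * X₂ with hS
  have hSpsd : S.PosSemidef := by
    have : S = (P₁ * X₂)ᵀ * (P₁ * X₂) := by
      rw [Matrix.transpose_mul, hPsymm, Matrix.mul_assoc, ← Matrix.mul_assoc P₁ P₁ X₂,
        hPidem, ← Matrix.mul_assoc]
    rw [this]
    have := Matrix.posSemidef_conjTranspose_mul_self (P₁ * X₂)
    simpa using this
  -- Λ is positive definite
  have hΛpd : Λ.PosDef := by
    rw [hΛ]
    exact Matrix.posDef_diagonal_iff.mpr hlam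
  have hΛdet : IsUnit Λ.det := hΛpd.det_pos.ne'.isUnit
  -- M := S + Λ is positive definite, hence invertible
  have hMpd : (S + Λ).PosDef := Matrix.PosDef.posSemidef_add hSpsd hΛpd
  have hMdet : IsUnit (S + Λ).det := hMpd.det_pos.ne'.isUnit
  -- determinant of 1 + P₁Γ
  have hfactor : P₁ * Γ = (P₁ * X₂) * (Λ⁻¹ * X₂ᵀ) := by
    rw [hΓ]; simp only [Matrix.mul_assoc]
  have hdet : (1 + P₁ * Γ).det = Λ⁻¹.det * (S + Λ).det := by
    rw [hfactor, Matrix.det_one_add_mul_comm]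
    have : (1 : Matrix (Fin p₂) (Fin p₂) ℝ) + Λ⁻¹ * X₂ᵀ * (P₁ * X₂) = Λ⁻¹ * (S + Λ) := by
      rw [Matrix.mul_add, Matrix.nonsing_inv_mul _ hΛdet, hS]
      rw [add_comm]
      congr 1
      simp only [Matrix.mul_assoc]
    rw [this, Matrix.det_mul]
  have hBdet : IsUnit (1 + P₁ * Γ).det := by
    rw [hdet]
    exact ((Matrix.isUnit_nonsing_inv_det_iff).mpr hΛdet).mul hMdet
  refine ⟨hBdet, ?_⟩
  set B := 1 + P₁ * Γ with hB
  -- 1 - B⁻¹ P₁ Γ = B⁻¹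
  have hBinv : B⁻¹ * B = 1 := Matrix.nonsing_inv_mul _ hBdet
  have hsimp : (1 : Matrix (Fin n) (Fin n) ℝ) - B⁻¹ * P₁ * Γ = B⁻¹ := by
    have := hBinv
    rw [hB] at this ⊢
    rw [Matrix.mul_add, mul_one] at this
    have h2 : (1 + P₁ * Γ)⁻¹ * P₁ * Γ = (1 + P₁ * Γ)⁻¹ * (P₁ * Γ) := by
      rw [Matrix.mul_assoc]
    rw [h2, eq_comm, eq_sub_iff_add_eq]
    exact this
  rw [hsimp]
  -- key identity: X₂ (S + Λ)⁻¹ X₂ᵀ * B = Γ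
  have hkey : X₂ * (S + Λ)⁻¹ * X₂ᵀ * B = Γ := by
    have h1 : X₂ᵀ * B = (S + Λ) * (Λ⁻¹ * X₂ᵀ) := by
      rw [hB, hΓ, Matrix.mul_add, Matrix.mul_one, Matrix.add_mul,
        ← Matrix.mul_assoc Λ Λ⁻¹ X₂ᵀ, Matrix.mul_nonsing_inv _ hΛdet, Matrix.one_mul,
        add_comm]
      congr 1
      rw [hS]
      simp only [Matrix.mul_assoc]
    rw [Matrix.mul_assoc (X₂ * (S + Λ)⁻¹) X₂ᵀ B, h1,
      Matrix.mul_assoc X₂ (S + Λ)⁻¹ _, Matrix.nonsing_inv_mul_cancel_left _ _ hMdet,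
      hΓ, Matrix.mul_assoc]
  -- conclude
  have : X₂ * (S + Λ)⁻¹ * X₂ᵀ = Γ * B⁻¹ := by
    rw [← hkey]
    exact (Matrix.mul_nonsing_inv_cancel_right _ _ hBdet).symm
  rw [this]
end
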